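/- Let c_p, c_d > 0 (prefill and decode costs) and B > 0, and consider minimising over continuous K ≥ 1 the function F(K) = (c_p + K·c_d)·(1 + 1/√K)², obtained by substituting the budget-saturating n = B/(c_p + K·c_d) into the squared sampling proxy. Then F'(K) = c_d + c_d·K^{-1/2} - c_p·K^{-3/2} - c_p·K^{-2}, and K²F'(K) factors (after the substitution u = √K) as (u+1)(c_d·u³ - c_p); hence the unique interior stationary point is K = (c_p/c_d)^{2/3}, and the constrained minimiser is K* = max{1, (c_p/c_d)^{2/3}}. -/

import Mathlib

/-!
With `u = √K` the derivative becomes a rational function of `u`, and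
`K² F'(K) = (u + 1)(c_d u³ - c_p)`. Since `u ↦ u³` is strictly increasing, `F'` has the sign of
`√K³ - √K₀³` where `K₀ = (c_p/c_d)^{2/3}` is the point with `√K₀³ = c_p/c_d`: `F` decreases on
`(0, K₀]` and increases on `[K₀, ∞)`, so on `[1, ∞)` it is minimal at `max 1 K₀`.
-/

open Real Set

lemma exists_eq_sq_of_pos {K : ℝ} (hK : 0 < K) : ∃ s, 0 < s ∧ K = s ^ 2 :=
  ⟨√K, sqrt_pos.2 hK, (sq_sqrt hK.le).symm⟩

lemma strictMonoOn_sqrt_pow_three : StrictMonoOn (fun K : ℝ => √K ^ 3) (Ici 0) :=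
  fun _ hx _ _ hxy => by dsimp only; gcongr

lemma isMinOn_max_of_antitoneOn_of_monotoneOn {α β : Type*} [LinearOrder α] [Preorder β]
    {f : α → β} {a m : α} (h_anti : AntitoneOn f (Icc a m)) (h_mono : MonotoneOn f (Ici m)) :
    IsMinOn f (Ici a) (max a m) := by
  intro x (hx : a ≤ x)
  rcases le_total a m with ham | hma
  · rw [max_eq_right ham]
    rcases le_total x m with hxm | hmx
    · exact h_anti ⟨hx, hxm⟩ ⟨ham, le_rfl⟩ hxm
    · exact h_mono le_rfl hmx hmx
  · rw [max_eq_left hma]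
    exact h_mono hma (hma.trans hx) hx

namespace RolloutAllocation

noncomputable section

def cost (cp cd K : ℝ) : ℝ := (cp + K * cd) * (1 + 1 / √K) ^ 2

def costDeriv (cp cd K : ℝ) : ℝ :=
  cd + cd * K ^ (-(1 : ℝ) / 2) - cp * K ^ (-(3 : ℝ) / 2) - cp * K ^ (-(2 : ℝ))

def stationaryPoint (cp cd : ℝ) : ℝ := (cp / cd) ^ ((2 : ℝ) / 3)

end

variable {cp cd K : ℝ}

lemma costDeriv_sq {s : ℝ} (hs : 0 < s) :
    costDeriv cp cd (s ^ 2) = cd + cd / s - cp / s ^ 3 - cp / s ^ 4 := by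
  have hpow (n : ℕ) : (s ^ 2) ^ (-(n : ℝ) / 2) = (s ^ n)⁻¹ := by
    rw [rpow_div_two_eq_sqrt _ (by positivity), sqrt_sq hs.le, rpow_neg hs.le, rpow_natCast]
  have h₁ := hpow 1
  have h₃ := hpow 3
  have h₄ := hpow 4
  push_cast at h₁ h₃ h₄
  rw [costDeriv, h₁, h₃, show -(2 : ℝ) = -4 / 2 by norm_num, h₄, pow_one]
  ring

lemma hasDerivAt_cost (hK : 0 < K) : HasDerivAt (cost cp cd) (costDeriv cp cd K) K := by
  have hlin := (hasDerivAt_mul_const (x := K) cd).const_add cp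
  have hrecip := ((hasDerivAt_const K (1 : ℝ)).fun_div (hasDerivAt_sqrt hK.ne')
    (sqrt_pos.2 hK).ne').const_add 1
  refine (hlin.mul (hrecip.fun_pow 2)).congr_deriv ?_
  obtain ⟨s, hs, rfl⟩ := exists_eq_sq_of_pos hK
  rw [costDeriv_sq hs, sqrt_sq hs.le]
  simp only [zero_mul, zero_sub, one_mul, Nat.cast_ofNat, Nat.add_one_sub_one, pow_one]
  field_simp
  ring

lemma sq_mul_costDeriv (hK : 0 < K) :
    K ^ 2 * costDeriv cp cd K = (√K + 1) * (cd * √K ^ 3 - cp) := by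
  obtain ⟨s, hs, rfl⟩ := exists_eq_sq_of_pos hK
  rw [costDeriv_sq hs, sqrt_sq hs.le]
  field_simp
  ring

lemma stationaryPoint_nonneg (hcp : 0 ≤ cp) (hcd : 0 ≤ cd) : 0 ≤ stationaryPoint cp cd :=
  rpow_nonneg (div_nonneg hcp hcd) _

lemma stationaryPoint_pos (hcp : 0 < cp) (hcd : 0 < cd) : 0 < stationaryPoint cp cd :=
  rpow_pos_of_pos (div_pos hcp hcd) _

lemma sqrt_stationaryPoint_pow_three (hcp : 0 ≤ cp) (hcd : 0 ≤ cd) :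
    √(stationaryPoint cp cd) ^ 3 = cp / cd := by
  have h := div_nonneg hcp hcd
  rw [stationaryPoint, sqrt_eq_rpow, ← rpow_mul h, ← rpow_natCast, ← rpow_mul h]
  norm_num

lemma costDeriv_eq_mul (hcp : 0 ≤ cp) (hcd : 0 < cd) (hK : 0 < K) :
    costDeriv cp cd K = (√K + 1) * cd / K ^ 2 * (√K ^ 3 - √(stationaryPoint cp cd) ^ 3) := by
  rw [sqrt_stationaryPoint_pow_three hcp hcd.le, div_mul_eq_mul_div,
    eq_div_iff (by positivity), mul_comm, sq_mul_costDeriv hK]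
  field_simp

lemma costDeriv_eq_zero_iff (hcp : 0 ≤ cp) (hcd : 0 < cd) (hK : 0 < K) :
    costDeriv cp cd K = 0 ↔ K = stationaryPoint cp cd := by
  have hpos : 0 < (√K + 1) * cd / K ^ 2 := by positivity
  rw [costDeriv_eq_mul hcp hcd hK, mul_eq_zero_iff_left hpos.ne', sub_eq_zero]
  exact strictMonoOn_sqrt_pow_three.eq_iff_eq hK.le (stationaryPoint_nonneg hcp hcd.le)

lemma costDeriv_nonneg_iff (hcp : 0 ≤ cp) (hcd : 0 < cd) (hK : 0 < K) :
    0 ≤ costDeriv cp cd K ↔ stationaryPoint cp cd ≤ K := by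
  have hpos : 0 < (√K + 1) * cd / K ^ 2 := by positivity
  rw [costDeriv_eq_mul hcp hcd hK, mul_nonneg_iff_of_pos_left hpos, sub_nonneg]
  exact strictMonoOn_sqrt_pow_three.le_iff_le (stationaryPoint_nonneg hcp hcd.le) hK.le

lemma costDeriv_nonpos_iff (hcp : 0 ≤ cp) (hcd : 0 < cd) (hK : 0 < K) :
    costDeriv cp cd K ≤ 0 ↔ K ≤ stationaryPoint cp cd := by
  have hpos : 0 < (√K + 1) * cd / K ^ 2 := by positivity
  rw [costDeriv_eq_mul hcp hcd hK, ← neg_nonneg, ← mul_neg, mul_nonneg_iff_of_pos_left hpos,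
    neg_nonneg, sub_nonpos]
  exact strictMonoOn_sqrt_pow_three.le_iff_le hK.le (stationaryPoint_nonneg hcp hcd.le)

lemma continuousOn_cost {s : Set ℝ} (hs : s ⊆ Ioi 0) : ContinuousOn (cost cp cd) s :=
  fun _ hK => (hasDerivAt_cost (hs hK)).continuousAt.continuousWithinAt

lemma antitoneOn_cost (hcp : 0 ≤ cp) (hcd : 0 < cd) :
    AntitoneOn (cost cp cd) (Ioc 0 (stationaryPoint cp cd)) := by
  refine antitoneOn_of_hasDerivWithinAt_nonpos (f' := costDeriv cp cd) (convex_Ioc _ _)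
    (continuousOn_cost fun _ hK => hK.1) (fun K hK => ?_) fun K hK => ?_
  all_goals rw [interior_Ioc] at hK
  · exact (hasDerivAt_cost hK.1).hasDerivWithinAt
  · exact (costDeriv_nonpos_iff hcp hcd hK.1).2 hK.2.le

lemma monotoneOn_cost (hcp : 0 < cp) (hcd : 0 < cd) :
    MonotoneOn (cost cp cd) (Ici (stationaryPoint cp cd)) := by
  have hK₀ := stationaryPoint_pos hcp hcd
  refine monotoneOn_of_hasDerivWithinAt_nonneg (f' := costDeriv cp cd) (convex_Ici _)
    (continuousOn_cost fun _ hK => hK₀.trans_le hK) (fun K hK => ?_) fun K hK => ?_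
  all_goals rw [interior_Ici] at hK
  · exact (hasDerivAt_cost (hK₀.trans hK)).hasDerivWithinAt
  · exact (costDeriv_nonneg_iff hcp.le hcd (hK₀.trans hK)).2 hK.le

end RolloutAllocation

open RolloutAllocation

/-- Optimal rollout allocation under prefill/decode costs: for `c_p, c_d > 0` and
`F(K) = (c_p + K·c_d)·(1 + 1/√K)²`, one has for all `K > 0` the derivative
`F'(K) = c_d + c_d·K^{-1/2} - c_p·K^{-3/2} - c_p·K^{-2}`; with `u = √K`, `K²·F'(K)`
factors as `(u+1)·(c_d·u³ - c_p)`, so the unique interior stationary point is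
`K = (c_p/c_d)^{2/3}`, and the minimiser over `K ≥ 1` is `K* = max{1, (c_p/c_d)^{2/3}}`. -/
theorem optimal_rollout_allocation_prefill_decode (cp cd : ℝ) (hcp : 0 < cp) (hcd : 0 < cd) :
    (∀ K : ℝ, 0 < K →
      HasDerivAt (fun K : ℝ => (cp + K * cd) * (1 + 1 / Real.sqrt K) ^ 2)
        (cd + cd * K ^ (-(1 : ℝ) / 2) - cp * K ^ (-(3 : ℝ) / 2) - cp * K ^ (-(2 : ℝ))) K) ∧
    (∀ K : ℝ, 0 < K →
      K ^ 2 * (cd + cd * K ^ (-(1 : ℝ) / 2) - cp * K ^ (-(3 : ℝ) / 2) - cp * K ^ (-(2 : ℝ)))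
        = (Real.sqrt K + 1) * (cd * Real.sqrt K ^ 3 - cp)) ∧
    (∀ K : ℝ, 0 < K →
      (cd + cd * K ^ (-(1 : ℝ) / 2) - cp * K ^ (-(3 : ℝ) / 2) - cp * K ^ (-(2 : ℝ)) = 0 ↔
        K = (cp / cd) ^ ((2 : ℝ) / 3))) ∧
    (∀ K : ℝ, 1 ≤ K →
      (cp + max 1 ((cp / cd) ^ ((2 : ℝ) / 3)) * cd) *
          (1 + 1 / Real.sqrt (max 1 ((cp / cd) ^ ((2 : ℝ) / 3)))) ^ 2 ≤
        (cp + K * cd) * (1 + 1 / Real.sqrt K) ^ 2) := by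
  have h_anti := (antitoneOn_cost hcp.le hcd).mono (Icc_subset_Ioc zero_lt_one le_rfl)
  have h_min := isMinOn_max_of_antitoneOn_of_monotoneOn h_anti (monotoneOn_cost hcp hcd)
  exact ⟨fun K hK => hasDerivAt_cost hK, fun K hK => sq_mul_costDeriv hK,
    fun K hK => costDeriv_eq_zero_iff hcp.le hcd hK, isMinOn_iff.1 h_min⟩
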